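/- Correctness of the reduction showing fallback voting resistant to constructive control by adding voters: let (C, V ∪ V') be the fallback voting election defined below from an X3C instance (B,S) with m > 1, where V is the list of registered voters and V' the list of unregistered voters. Then S contains an exact cover for B if and only if there exists a sublist V'' ⊆ V' with ||V''|| ≤ m such that w is the unique FV winner of (C, V ∪ V''). -/

import Mathlib

/-!
Fallback voting (Brams and Sanver).  A vote is represented by the list of the
candidates the voter approves of, in order of preference (most preferred
first); all candidates not occurring in the list are disapproved.  The voter
collection is a multiset of such votes.
-/

namespace FV

variable {α : Type} [DecidableEq α]

/-- The level-`i` score of candidate `c` in the election with votes `V`: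
the number of voters who approve of `c` and rank `c` among their top `i`
approved candidates. -/
def levelScore (V : Multiset (List α)) (i : ℕ) (c : α) : ℕ :=
  (V.filter (fun v => c ∈ v.take i)).card

/-- The approval score of candidate `c`: the number of voters approving of `c`. -/
def apprScore (V : Multiset (List α)) (c : α) : ℕ :=
  (V.filter (fun v => c ∈ v)).card

/-- Restriction of the votes to the candidate set `C`: each voter's approval
set and ranking are restricted to `C`. -/
def restrict (C : Finset α) (V : Multiset (List α)) : Multiset (List α) :=
  V.map (fun v => v.filter (fun x => decide (x ∈ C)))

instance instDecMaj (C : Finset α) (V : Multiset (List α)) :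
    DecidablePred (fun i =>
      i ∈ Finset.Icc 1 C.card ∧ ∃ c ∈ C, 2 * levelScore V i c > Multiset.card V) :=
  fun _ => inferInstance

/-- The set of fallback-voting winners of the election `(C,V)`:
if some level `i` with `1 ≤ i ≤ ‖C‖` exists at which some candidate of `C`
has a strict majority (level-`i` score exceeding `‖V‖/2`), then the winners
are the candidates with the largest level-`i₀` score, where `i₀` is the
smallest such level; otherwise the winners are the candidates with the largest
approval score. -/
def winners (C : Finset α) (V : Multiset (List α)) : Finset α :=
  if h : ∃ i, i ∈ Finset.Icc 1 C.card ∧ ∃ c ∈ C, 2 * levelScore V i c > Multiset.card V then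
    C.filter (fun c => ∀ d ∈ C, levelScore V (Nat.find h) d ≤ levelScore V (Nat.find h) c)
  else
    C.filter (fun c => ∀ d ∈ C, apprScore V d ≤ apprScore V c)

/-- The FV winners of the election `(C,V)` restricted to the candidate set `C`. -/
def fwinners (C : Finset α) (V : Multiset (List α)) : Finset α :=
  winners C (restrict C V)

end FV

/-! ### The construction for constructive control by adding voters -/

/-- Candidates: `B = {b_0,…,b_{3m-1}}`, the distinguished candidate `w`, and
the padding candidates `D = {d_0,…,d_{n(3m−4)−1}}` (indexed by naturals). -/
inductive CandC (m : ℕ) where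
  | b (j : Fin (3*m))
  | dd (p : ℕ)
  | w
deriving DecidableEq

/-- The elements of a subset `T ⊆ B`, ranked according to the fixed linear
order on `B`. -/
def blistC {m : ℕ} (T : Finset (Fin (3*m))) : List (CandC m) :=
  (T.sort (· ≤ ·)).map CandC.b

/-- All of `B`, ranked. -/
def BallC (m : ℕ) : List (CandC m) :=
  (List.finRange (3*m)).map CandC.b

/-- The candidate set `C = B ∪ {w} ∪ D`. -/
def CCc (m n : ℕ) : Finset (CandC m) :=
  (Finset.univ : Finset (Fin (3*m))).image CandC.b ∪
  (Finset.range (n*(3*m-4))).image CandC.dd ∪ {CandC.w}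

/-- The block `D_i` of `3m−4` consecutive candidates of `D`, ranked. -/
def DlistC (m : ℕ) (i : ℕ) : List (CandC m) :=
  (List.range (3*m-4)).map (fun t => CandC.dd (i*(3*m-4)+t))

/-- The registered voters: `m−2` voters `B | D∪{w}`. -/
def VregC (m : ℕ) : Multiset (List (CandC m)) :=
  Multiset.replicate (m-2) (BallC m)

/-- The unregistered voters: for each `i`, one voter
`D_i S_i w | (B−S_i) ∪ (D−D_i)`. -/
def VunC (m n : ℕ) (S : Fin n → Finset (Fin (3*m))) : Multiset (List (CandC m)) :=
  ∑ i : Fin n,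
    ({DlistC m i.1 ++ blistC (S i) ++ [CandC.w]} : Multiset (List (CandC m)))

/-!
Adding `k` unregistered voters, `w` is ranked last (at position `3m`) by exactly those `k` voters,
`b_j` is approved by the `m - 2` registered voters and by the added voters whose `S_i` contains
`b_j`, and each padding candidate by at most one voter. So `w` scores nothing below level `3m`,
and a unique win for `w` must be decided at level `3m` (or by approval, which is the same here),
where it means `k > m - 2 + #{i | b_j ∈ S_i}` for every `j`. With `k ≤ m` and `3k` incidences in
total this holds exactly when the added sets form an exact cover; conversely an exact cover gives
`w` a majority of `m` out of `2m - 2` at level `3m`, while nobody else ever gets more than `m - 1`.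
-/

open Finset

theorem Multiset.exists_le_eq_map_of_le_map {α β : Type*} {f : α → β} {s : Multiset α}
    {u : Multiset β} (h : u ≤ s.map f) : ∃ t ≤ s, u = t.map f := by
  induction u using Quot.induction_on with | h l =>
  induction s using Quot.induction_on with | h k =>
  obtain ⟨l', hperm, hsub⟩ := Multiset.coe_le.1 h
  obtain ⟨k', hk', rfl⟩ := List.sublist_map_iff.1 hsub
  exact ⟨k', Multiset.coe_le.2 hk'.subperm, Multiset.coe_eq_coe.2 hperm.symm⟩

section ExactCover

variable {ι β : Type*} [DecidableEq β]

def coverCount (S : ι → Finset β) (I : Finset ι) (x : β) : ℕ :=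
  #{i ∈ I | x ∈ S i}

theorem existsUnique_iff_coverCount_eq_one (S : ι → Finset β) (I : Finset ι) (x : β) :
    (∃! i, i ∈ I ∧ x ∈ S i) ↔ coverCount S I x = 1 := by
  simp [coverCount, Finset.card_eq_one_iff_existsUnique]

theorem sum_coverCount [Fintype β] {S : ι → Finset β} {k : ℕ} (hS : ∀ i, #(S i) = k)
    (I : Finset ι) : ∑ x, coverCount S I x = k * #I := by
  simp only [coverCount, Finset.card_filter]
  rw [Finset.sum_comm]
  simp [hS, mul_comm]

theorem card_eq_of_coverCount_eq_one {m : ℕ} {S : ι → Finset (Fin (3*m))}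
    (hS : ∀ i, #(S i) = 3) {I : Finset ι} (h : ∀ x, coverCount S I x = 1) : #I = m := by
  have hsum := sum_coverCount hS I
  simp only [h, Finset.sum_const, Finset.card_univ, Fintype.card_fin, smul_eq_mul] at hsum
  omega

theorem coverCount_eq_one_of_forall_lt {m : ℕ} {S : ι → Finset (Fin (3*m))}
    (hS : ∀ i, #(S i) = 3) {I : Finset ι} (hI : #I ≤ m)
    (h : ∀ x, m - 2 + coverCount S I x < #I) (x : Fin (3*m)) : coverCount S I x = 1 := by
  have hsum := sum_coverCount hS I
  have hle : ∀ y, coverCount S I y ≤ 1 := fun y => by have := h y; omega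
  have hIm : #I = m := by
    by_contra hne
    have hzero : ∀ y, coverCount S I y = 0 := fun y => by have := h y; omega
    simp only [hzero, Finset.sum_const_zero] at hsum
    have := h x
    omega
  have hsum_one : ∑ y, coverCount S I y = ∑ _y : Fin (3*m), 1 := by simp [hsum, hIm]
  exact (Finset.sum_eq_sum_iff_of_le fun y _ => hle y).1 hsum_one x (Finset.mem_univ x)

end ExactCover

namespace FV

variable {α : Type} [DecidableEq α]

theorem restrict_eq_self {C : Finset α} {V : Multiset (List α)}
    (h : ∀ v ∈ V, ∀ x ∈ v, x ∈ C) : restrict C V = V := by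
  conv_rhs => rw [← Multiset.map_id V]
  exact Multiset.map_congr rfl fun v hv =>
    List.filter_eq_self.2 fun x hx => decide_eq_true (h v hv x hx)

theorem levelScore_le_apprScore (V : Multiset (List α)) (i : ℕ) (c : α) :
    levelScore V i c ≤ apprScore V c :=
  Multiset.card_le_card (Multiset.monotone_filter_right _ fun _ h => List.mem_of_mem_take h)

theorem levelScore_eq_apprScore {V : Multiset (List α)} {i : ℕ}
    (h : ∀ v ∈ V, v.length ≤ i) (c : α) : levelScore V i c = apprScore V c := by
  unfold levelScore apprScore
  rw [Multiset.filter_congr fun v hv => by rw [List.take_of_length_le (h v hv)]]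

theorem apprScore_add (V W : Multiset (List α)) (c : α) :
    apprScore (V + W) c = apprScore V c + apprScore W c := by
  simp [apprScore, Multiset.filter_add]

theorem apprScore_replicate (k : ℕ) (v : List α) (c : α) :
    apprScore (Multiset.replicate k v) c = if c ∈ v then k else 0 := by
  unfold apprScore
  split_ifs with h
  · rw [Multiset.filter_eq_self.2 fun u hu => Multiset.eq_of_mem_replicate hu ▸ h,
      Multiset.card_replicate]
  · rw [Multiset.filter_eq_nil.2 fun u hu => Multiset.eq_of_mem_replicate hu ▸ h,
      Multiset.card_zero]

theorem filter_forall_le_eq_singleton_iff {β : Type*} [LinearOrder β] (C : Finset α)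
    (f : α → β) {c : α} :
    C.filter (fun a => ∀ d ∈ C, f d ≤ f a) = {c} ↔
      c ∈ C ∧ ∀ d ∈ C, d ≠ c → f d < f c := by
  simp only [Finset.eq_singleton_iff_unique_mem, Finset.mem_filter]
  constructor
  · rintro ⟨⟨hc, hmax⟩, huniq⟩
    refine ⟨hc, fun d hd hdc => (hmax d hd).lt_of_ne fun hfd => hdc (huniq d ⟨hd, ?_⟩)⟩
    exact fun e he => hfd ▸ hmax e he
  · rintro ⟨hc, hlt⟩
    refine ⟨⟨hc, fun d hd => ?_⟩, fun a ⟨ha, hamax⟩ => ?_⟩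
    · rcases eq_or_ne d c with rfl | hdc
      exacts [le_rfl, (hlt d hd hdc).le]
    · by_contra hac
      exact (hlt a ha hac).not_ge (hamax c hc)

/-- When all ballots have length at most `L`, approval scores are level-`L` scores, so a unique
winner beats every other candidate at a single level. -/
theorem exists_levelScore_lt_of_winners_eq_singleton {C : Finset α} {V : Multiset (List α)}
    {c : α} {L : ℕ} (hV : ∀ v ∈ V, v.length ≤ L) (h : winners C V = {c}) :
    ∃ i, ∀ d ∈ C, d ≠ c → levelScore V i d < levelScore V i c := by
  unfold winners at h
  split_ifs at h
  · exact ⟨_, ((filter_forall_le_eq_singleton_iff _ _).1 h).2⟩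
  · refine ⟨L, ?_⟩
    simp only [levelScore_eq_apprScore hV]
    exact ((filter_forall_le_eq_singleton_iff _ _).1 h).2

theorem winners_eq_singleton_of_majority {C : Finset α} {V : Multiset (List α)} {c : α}
    {i : ℕ} (hi : i ∈ Finset.Icc 1 C.card) (hc : c ∈ C)
    (hmaj : Multiset.card V < 2 * levelScore V i c)
    (hbelow : ∀ l < i, ∀ d ∈ C, 2 * levelScore V l d ≤ Multiset.card V)
    (hlt : ∀ d ∈ C, d ≠ c → levelScore V i d < levelScore V i c) :
    winners C V = {c} := by
  have hex :
      ∃ i, i ∈ Finset.Icc 1 C.card ∧ ∃ c ∈ C, 2 * levelScore V i c > Multiset.card V :=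
    ⟨i, hi, c, hc, hmaj⟩
  have hfind : Nat.find hex = i := (Nat.find_eq_iff hex).2
    ⟨⟨hi, c, hc, hmaj⟩, fun l hl ⟨_, d, hd, hmajd⟩ => (hbelow l hl d hd).not_gt hmajd⟩
  rw [winners, dif_pos hex, hfind]
  exact (filter_forall_le_eq_singleton_iff _ _).2 ⟨hc, hlt⟩

end FV

namespace AddingVoters

variable {m n : ℕ} (S : Fin n → Finset (Fin (3*m)))

def unregVote (i : Fin n) : List (CandC m) :=
  DlistC m i ++ blistC (S i) ++ [CandC.w]

/-- The election `(C, V ∪ V'')` where `V''` consists of the unregistered voters indexed by `I`. -/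
def election (I : Finset (Fin n)) : Multiset (List (CandC m)) :=
  VregC m + I.val.map (unregVote S)

theorem VunC_eq_map : VunC m n S = Finset.univ.val.map (unregVote S) := by
  rw [← Multiset.sum_map_singleton (Multiset.map _ _), Multiset.map_map, VunC,
    Finset.sum_eq_multiset_sum]
  rfl

theorem card_election (I : Finset (Fin n)) :
    Multiset.card (election S I) = m - 2 + #I := by
  simp [election, VregC]

theorem b_mem_unregVote_iff {i : Fin n} {j : Fin (3*m)} :
    CandC.b j ∈ unregVote S i ↔ j ∈ S i := by
  simp [unregVote, DlistC, blistC]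

theorem dd_mem_unregVote_iff {i : Fin n} {p : ℕ} :
    CandC.dd p ∈ unregVote S i ↔ ∃ t < 3*m - 4, i * (3*m - 4) + t = p := by
  simp [unregVote, DlistC, blistC]

theorem length_unregVote (hm : 1 < m) {i : Fin n} (hS : #(S i) = 3) :
    (unregVote S i).length = 3*m := by
  simp only [unregVote, DlistC, blistC, List.length_append, List.length_map, List.length_range,
    length_sort, hS, List.length_singleton]
  omega

theorem w_notMem_take_unregVote (hm : 1 < m) {i : Fin n} (hS : #(S i) = 3) {l : ℕ}
    (hl : l < 3*m) : CandC.w ∉ (unregVote S i).take l := by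
  have hlen : l ≤ (DlistC m i ++ blistC (S i)).length := by
    simp only [DlistC, blistC, List.length_append, List.length_map, List.length_range,
      length_sort, hS]
    omega
  rw [unregVote, List.take_append_of_le_length hlen]
  intro hw
  simpa [DlistC, blistC] using List.mem_of_mem_take hw

theorem three_mul_le_card_CCc : 3*m ≤ #(CCc m n) :=
  calc 3*m = #((Finset.univ : Finset (Fin (3*m))).image CandC.b) := by
        rw [Finset.card_image_of_injective _ fun _ _ => CandC.b.inj, Finset.card_univ,
          Fintype.card_fin]
    _ ≤ #(CCc m n) := Finset.card_le_card (subset_union_left.trans subset_union_left)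

theorem mem_CCc_of_mem_election (I : Finset (Fin n)) :
    ∀ v ∈ election S I, ∀ x ∈ v, x ∈ CCc m n := by
  simp only [election, VregC, Multiset.mem_add, Multiset.mem_replicate, Multiset.mem_map]
  rintro v (⟨-, rfl⟩ | ⟨i, -, rfl⟩) x hx
  · obtain ⟨j, -, rfl⟩ := List.mem_map.1 hx
    simp [CCc]
  · cases x with
    | b j => simp [CCc]
    | w => simp [CCc]
    | dd p =>
      obtain ⟨t, ht, rfl⟩ := (dd_mem_unregVote_iff S).1 hx
      simp only [CCc, mem_union, mem_image, mem_range, mem_singleton, CandC.dd.injEq]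
      refine Or.inl (Or.inr ⟨_, ?_, rfl⟩)
      calc i * (3*m - 4) + t < (i + 1) * (3*m - 4) := by rw [add_one_mul]; omega
        _ ≤ n * (3*m - 4) := Nat.mul_le_mul_right _ i.2

theorem length_le_of_mem_election (hm : 1 < m) (hS : ∀ i, #(S i) = 3) (I : Finset (Fin n)) :
    ∀ v ∈ election S I, v.length ≤ 3*m := by
  simp only [election, VregC, Multiset.mem_add, Multiset.mem_replicate, Multiset.mem_map]
  rintro v (⟨-, rfl⟩ | ⟨i, -, rfl⟩)
  · simp [BallC]
  · exact (length_unregVote S hm (hS i)).le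

theorem apprScore_election (I : Finset (Fin n)) (c : CandC m) :
    FV.apprScore (election S I) c =
      (if c ∈ BallC m then m - 2 else 0) + #{i ∈ I | c ∈ unregVote S i} := by
  rw [election, VregC, FV.apprScore_add, FV.apprScore_replicate, FV.apprScore,
    Multiset.filter_map, Multiset.card_map]
  rfl

theorem apprScore_election_w (I : Finset (Fin n)) : FV.apprScore (election S I) CandC.w = #I := by
  simp [apprScore_election, BallC, unregVote]

theorem apprScore_election_b (I : Finset (Fin n)) (j : Fin (3*m)) :
    FV.apprScore (election S I) (CandC.b j) = m - 2 + coverCount S I j := by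
  simp [apprScore_election, BallC, b_mem_unregVote_iff, coverCount]

/-- Each padding candidate occurs in the ballot of one unregistered voter only. -/
theorem apprScore_election_dd_le (I : Finset (Fin n)) (p : ℕ) :
    FV.apprScore (election S I) (CandC.dd p) ≤ 1 := by
  rw [apprScore_election, if_neg (by simp [BallC]), zero_add, Finset.card_le_one]
  simp only [Finset.mem_filter, dd_mem_unregVote_iff]
  rintro i ⟨-, t, ht, rfl⟩ i' ⟨-, t', ht', h⟩
  have hdiv : ∀ a s : ℕ, s < 3*m - 4 → (a * (3*m - 4) + s) / (3*m - 4) = a := fun a s hs =>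
    Nat.div_eq_of_lt_le (Nat.le_add_right _ _) (by rw [add_one_mul]; omega)
  exact Fin.ext (by rw [← hdiv i t ht, ← h, hdiv i' t' ht'])

theorem levelScore_election_w_of_lt (hm : 1 < m) (hS : ∀ i, #(S i) = 3) (I : Finset (Fin n))
    {l : ℕ} (hl : l < 3*m) : FV.levelScore (election S I) l CandC.w = 0 := by
  rw [FV.levelScore, Multiset.card_eq_zero, Multiset.filter_eq_nil]
  simp only [election, VregC, Multiset.mem_add, Multiset.mem_replicate, Multiset.mem_map]
  rintro v (⟨-, rfl⟩ | ⟨i, -, rfl⟩)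
  · exact fun h => by simpa [BallC] using List.mem_of_mem_take h
  · exact w_notMem_take_unregVote S hm (hS i) hl

theorem fwinners_election_of_coverCount_le_one (hm : 1 < m) (hS : ∀ i, #(S i) = 3)
    {I : Finset (Fin n)} (hI : #I = m) (hcnt : ∀ j, coverCount S I j ≤ 1) :
    FV.fwinners (CCc m n) (election S I) = {CandC.w} := by
  have hcard : Multiset.card (election S I) = 2 * (m - 1) := by rw [card_election, hI]; omega
  have hle : ∀ d, d ≠ CandC.w → FV.apprScore (election S I) d ≤ m - 1 := by
    rintro (j | p | _) hd
    · rw [apprScore_election_b]; have := hcnt j; omega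
    · have := apprScore_election_dd_le S I p; omega
    · exact absurd rfl hd
  have hw : FV.levelScore (election S I) (3*m) CandC.w = m := by
    rw [FV.levelScore_eq_apprScore (length_le_of_mem_election S hm hS I), apprScore_election_w,
      hI]
  rw [FV.fwinners, FV.restrict_eq_self (mem_CCc_of_mem_election S I)]
  refine FV.winners_eq_singleton_of_majority
    (Finset.mem_Icc.2 ⟨by omega, three_mul_le_card_CCc⟩)
    (by simp [CCc]) (by omega) (fun l hl d _ => ?_) (fun d _ hd => ?_)
  · by_cases hd : d = CandC.w
    · rw [hd, levelScore_election_w_of_lt S hm hS I hl]; omega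
    · have := (FV.levelScore_le_apprScore _ l d).trans (hle d hd); omega
  · have := (FV.levelScore_le_apprScore _ (3*m) d).trans (hle d hd); omega

/-- `w` can only beat `b j` at a level `≥ 3m`, where all scores are approval scores. -/
theorem lt_card_of_fwinners_election (hm : 1 < m) (hS : ∀ i, #(S i) = 3)
    {I : Finset (Fin n)} (h : FV.fwinners (CCc m n) (election S I) = {CandC.w}) (j : Fin (3*m)) :
    m - 2 + coverCount S I j < #I := by
  rw [FV.fwinners, FV.restrict_eq_self (mem_CCc_of_mem_election S I)] at h
  obtain ⟨i, hi⟩ :=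
    FV.exists_levelScore_lt_of_winners_eq_singleton (length_le_of_mem_election S hm hS I) h
  have hj := hi (CandC.b j) (by simp [CCc]) (by simp)
  have h3m : 3*m ≤ i := by
    by_contra hlt
    rw [levelScore_election_w_of_lt S hm hS I (not_le.1 hlt)] at hj
    omega
  have hlen v hv := (length_le_of_mem_election S hm hS I v hv).trans h3m
  rwa [FV.levelScore_eq_apprScore hlen, FV.levelScore_eq_apprScore hlen, apprScore_election_b,
    apprScore_election_w] at hj

end AddingVoters

/-- Correctness of the reduction showing fallback voting resistant to
constructive control by adding voters: for the election `(C, V ∪ V')` defined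
above from an X3C instance `(B,S)` with `m > 1` (all `‖S_i‖ = 3`), `S`
contains an exact cover for `B` if and only if there is a submultiset
`V'' ⊆ V'` of the unregistered voters with `‖V''‖ ≤ m` such that `w` is the
unique FV winner of `(C, V ∪ V'')`. -/
theorem fv_constructive_adding_voters
    (m n : ℕ) (hm : 1 < m) (S : Fin n → Finset (Fin (3*m)))
    (hS : ∀ i, (S i).card = 3) :
    (∃ I : Finset (Fin n), ∀ x : Fin (3*m), ∃! i : Fin n, i ∈ I ∧ x ∈ S i) ↔
    (∃ V'' : Multiset (List (CandC m)), V'' ≤ VunC m n S ∧ Multiset.card V'' ≤ m ∧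
      FV.fwinners (CCc m n) (VregC m + V'') = {CandC.w}) := by
  rw [AddingVoters.VunC_eq_map]
  constructor
  · rintro ⟨I, hI⟩
    have hcnt : ∀ x, coverCount S I x = 1 := fun x =>
      (existsUnique_iff_coverCount_eq_one S I x).1 (hI x)
    have hcard : #I = m := card_eq_of_coverCount_eq_one hS hcnt
    refine ⟨I.val.map (AddingVoters.unregVote S),
      Multiset.map_le_map (Finset.val_le_iff.2 (Finset.subset_univ I)), by simp [hcard], ?_⟩
    exact AddingVoters.fwinners_election_of_coverCount_le_one S hm hS hcard fun x => (hcnt x).le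
  · rintro ⟨V'', hle, hcard, hw⟩
    obtain ⟨t, ht, rfl⟩ := Multiset.exists_le_eq_map_of_le_map hle
    let I : Finset (Fin n) := ⟨t, Multiset.nodup_of_le ht Finset.univ.nodup⟩
    have hlt := AddingVoters.lt_card_of_fwinners_election (I := I) S hm hS hw
    exact ⟨I, fun x => (existsUnique_iff_coverCount_eq_one S I x).2
      (coverCount_eq_one_of_forall_lt hS (by rw [Multiset.card_map] at hcard; exact hcard) hlt x)⟩
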